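/- Let M : {-1,+1}^m → [-1,+1]^m satisfy (ε,δ)-DP, S uniform on {-1,+1}^m, T = M(S). Let g : [-1,1]^m × [0,1] → ℝ satisfy: for all t and all γ ∈ [0,1], P[∑_i |t_i|·Š_i ≥ g(t,γ)] ≤ γ where Š ~ Bernoulli(e^ε/(e^ε+1))^m. Then for all γ ∈ [0,1] and τ > 0, P[∑_i max{0, T_i·S_i} ≥ g(T,γ) + τ] ≤ γ + 2mδ/τ. -/

import Mathlib

/-!
The threshold `g` need not be measurable, so it is first replaced by the least value `a t` of the
coin score `∑ᵢ |tᵢ| Šᵢ` whose strict upper tail has mass at most `γ`; validity of `g` forces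
`a t ≤ g t γ` on `[-1, 1]^m`. The indicator of `{X ≥ a + τ}` is then smoothed into the ramp
`clamp ((x - a t) / τ, 0, 1)`, which is monotone and `1/τ`-Lipschitz.

In the `k`-th hybrid the first `k` terms of the guessing score `∑ᵢ max 0 (Tᵢ Sᵢ)` are replaced by
the coin terms `|Tᵢ| Šᵢ`. Hybrid `0` dominates the probability to be bounded, and hybrid `m` is at
most `γ` by the choice of `a`. Passing from hybrid `k` to `k + 1` costs at most `δ / τ`:
conditionally on the other coordinates of `S`, the two values of `Sₖ` give mutually `(ε, δ)`-close
output distributions, and the layer-cake formula turns this into the statement that guessing the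
sign of `Tₖ` gains no more than an `eᵉ / (eᵉ + 1)`-biased coin, up to `δ` per unit of the (at most
`1/τ`) gain. Summing over `k` gives `γ + mδ/τ`.
-/

open MeasureTheory ProbabilityTheory Real

def sgn (b : Bool) : ℝ := if b then 1 else -1

def Adjacent {m : ℕ} (s s' : Fin m → Bool) : Prop := ∃ j, ∀ i, i ≠ j → s i = s' i

def ApproxDP {m : ℕ} (M : (Fin m → Bool) → Measure (Fin m → ℝ)) (ε δ : ℝ) : Prop :=
  ∀ s s', Adjacent s s' → ∀ A : Set (Fin m → ℝ), MeasurableSet A →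
    M s A ≤ ENNReal.ofReal (exp ε) * M s' A + ENNReal.ofReal δ

def bernVecPr {m : ℕ} (q : ℝ) (sh : Fin m → Bool) : ℝ :=
  ∏ i, if sh i then q else 1 - q

open Finset

section BernoulliWeights

variable {m : ℕ}

lemma bernVecPr_nonneg {q : ℝ} (h0 : 0 ≤ q) (h1 : q ≤ 1) (sh : Fin m → Bool) :
    0 ≤ bernVecPr q sh :=
  prod_nonneg fun i _ => by cases sh i <;> simp [h0, h1]

lemma sum_bernVecPr (q : ℝ) : ∑ sh : Fin m → Bool, bernVecPr q sh = 1 := by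
  simp only [bernVecPr, ← Fintype.prod_sum fun (_ : Fin m) (b : Bool) => if b then q else 1 - q,
    Fintype.sum_bool, if_true, Bool.false_eq_true, if_false, add_sub_cancel, prod_const_one]

lemma bernVecPr_half (s : Fin m → Bool) : bernVecPr (1 / 2) s = ((2 : ℝ) ^ m)⁻¹ := by
  norm_num [bernVecPr]

lemma sum_bernVecPr_mul_eq_sum_update (q : ℝ) (k : Fin m) (f : (Fin m → Bool) → ℝ) :
    ∑ s, bernVecPr q s * f s = ∑ s, bernVecPr q s *
      (q * f (Function.update s k true) + (1 - q) * f (Function.update s k false)) := by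
  set e := Equiv.funSplitAt k Bool
  have hprod (b : Bool) (r : {i // i ≠ k} → Bool) : bernVecPr q (e.symm (b, r)) =
      (if b then q else 1 - q) * ∏ i : {i // i ≠ k}, if r i then q else 1 - q := by
    rw [bernVecPr, Fintype.prod_eq_mul_prod_subtype_ne _ k]
    congr 1
    · simp [e, Equiv.funSplitAt_symm_apply]
    · exact Fintype.prod_congr _ _ fun i => by simp [e, Equiv.funSplitAt_symm_apply, i.2]
  have hupd (b c : Bool) (r : {i // i ≠ k} → Bool) :
      Function.update (e.symm (b, r)) k c = e.symm (c, r) := by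
    ext j
    by_cases h : j = k
    · subst h; simp [e, Equiv.funSplitAt_symm_apply]
    · simp [e, Equiv.funSplitAt_symm_apply, h]
  rw [← e.symm.sum_comp, ← e.symm.sum_comp, Fintype.sum_prod_type_right,
    Fintype.sum_prod_type_right]
  refine sum_congr rfl fun r _ => ?_
  simp only [Fintype.sum_bool, hprod, hupd, ↓reduceIte, Bool.false_eq_true]
  ring

lemma sum_half_add_sum_half_le {ι : Type*} [Fintype ι] {w a a' r r' : ι → ℝ} {c : ℝ}
    (hw : ∑ i, w i = 1) (hw0 : ∀ i, 0 ≤ w i) (h : ∀ i, a i + a' i ≤ r i + r' i + 2 * c) :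
    1 / 2 * ∑ i, w i * a i + (1 - 1 / 2) * ∑ i, w i * a' i ≤
      1 / 2 * ∑ i, w i * r i + (1 - 1 / 2) * ∑ i, w i * r' i + c := by
  have := sum_le_sum fun i (_ : i ∈ univ) => mul_le_mul_of_nonneg_left (h i) (hw0 i)
  simp only [mul_add, sum_add_distrib, ← sum_mul, hw, one_mul] at this
  linarith

end BernoulliWeights

lemma exp_div_exp_add_one_le_one (ε : ℝ) : exp ε / (exp ε + 1) ≤ 1 :=
  (div_le_one (by positivity)).2 (by linarith)

section ApproximateDP

variable {α : Type*} [MeasurableSpace α]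

def DPClose (μ ν : Measure α) (ε δ : ℝ) : Prop :=
  ∀ A, MeasurableSet A → μ A ≤ ENNReal.ofReal (exp ε) * ν A + ENNReal.ofReal δ

lemma ApproxDP.dpClose {m : ℕ} {M : (Fin m → Bool) → Measure (Fin m → ℝ)} {ε δ : ℝ}
    (hDP : ApproxDP M ε δ) {s s' : Fin m → Bool} (h : Adjacent s s') :
    DPClose (M s) (M s') ε δ :=
  hDP s s' h

variable {μ ν : Measure α} {ε δ : ℝ}

lemma integrable_of_nonneg_of_ae_le [IsFiniteMeasure μ] {f : α → ℝ} {c : ℝ} (hf : Measurable f)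
    (hf0 : ∀ x, 0 ≤ f x) (hfc : ∀ᵐ x ∂μ, f x ≤ c) : Integrable f μ :=
  Integrable.of_bound hf.aestronglyMeasurable c <| by
    filter_upwards [hfc] with x hx using by rwa [Real.norm_of_nonneg (hf0 x)]

lemma DPClose.measureReal_le [IsFiniteMeasure ν] (h : DPClose μ ν ε δ) (hδ : 0 ≤ δ)
    {A : Set α} (hA : MeasurableSet A) : μ.real A ≤ exp ε * ν.real A + δ := by
  have := ENNReal.toReal_mono (by finiteness) (h A hA)
  rwa [ENNReal.toReal_add (by finiteness) (by finiteness), ENNReal.toReal_mul,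
    ENNReal.toReal_ofReal (exp_pos ε).le, ENNReal.toReal_ofReal hδ] at this

lemma integrableOn_Ioc_measureReal_le [IsFiniteMeasure ν] (f : α → ℝ) (c : ℝ) :
    IntegrableOn (fun y => ν.real {x | y ≤ f x}) (Set.Ioc 0 c) := by
  refine (AntitoneOn.integrableOn_isCompact isCompact_Icc ?_).mono_set Set.Ioc_subset_Icc_self
  exact fun y _ y' _ hy => measureReal_mono fun x hx => hy.trans hx

lemma DPClose.integral_le [IsFiniteMeasure μ] [IsFiniteMeasure ν] (h : DPClose μ ν ε δ)
    (hδ : 0 ≤ δ) {c : ℝ} (hc : 0 ≤ c) {f : α → ℝ} (hf : Measurable f) (hf0 : ∀ x, 0 ≤ f x)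
    (hμ : ∀ᵐ x ∂μ, f x ≤ c) (hν : ∀ᵐ x ∂ν, f x ≤ c) :
    ∫ x, f x ∂μ ≤ exp ε * ∫ x, f x ∂ν + c * δ := by
  rw [(integrable_of_nonneg_of_ae_le hf hf0 hμ).integral_eq_integral_Ioc_meas_le
      (ae_of_all _ hf0) hμ,
    (integrable_of_nonneg_of_ae_le hf hf0 hν).integral_eq_integral_Ioc_meas_le
      (ae_of_all _ hf0) hν]
  have hconst : IntegrableOn (fun _ => δ) (Set.Ioc 0 c) := integrableOn_const (by simp)
  calc ∫ y in Set.Ioc 0 c, μ.real {x | y ≤ f x}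
      ≤ ∫ y in Set.Ioc 0 c, (exp ε * ν.real {x | y ≤ f x} + δ) :=
        setIntegral_mono (integrableOn_Ioc_measureReal_le f c)
          (((integrableOn_Ioc_measureReal_le f c).const_mul _).add hconst)
          fun y => h.measureReal_le hδ (measurableSet_le measurable_const hf)
    _ = exp ε * (∫ y in Set.Ioc 0 c, ν.real {x | y ≤ f x}) + c * δ := by
        rw [integral_add ((integrableOn_Ioc_measureReal_le f c).const_mul _) hconst,
          integral_const_mul, setIntegral_const, measureReal_def, Real.volume_Ioc,
          ENNReal.toReal_ofReal (by linarith), sub_zero, smul_eq_mul]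

variable [IsFiniteMeasure μ] [IsFiniteMeasure ν] {c : ℝ}

/-- Mutually `(ε, δ)`-close `μ` and `ν` are told apart no better than by randomized response with
bias `eᵉ / (eᵉ + 1)`: `u` and `v` are the gains of the two guesses and `D` bounds their sum. -/
lemma DPClose.integral_add_integral_le (hμν : DPClose μ ν ε δ) (hνμ : DPClose ν μ ε δ)
    (hδ : 0 ≤ δ) (hc : 0 ≤ c) {u v D : α → ℝ} (hu : Measurable u) (hv : Measurable v)
    (hD : Measurable D) (hu0 : ∀ x, 0 ≤ u x) (hv0 : ∀ x, 0 ≤ v x) (huvD : ∀ x, u x + v x ≤ D x)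
    (hDμ : ∀ᵐ x ∂μ, D x ≤ c) (hDν : ∀ᵐ x ∂ν, D x ≤ c) :
    ∫ x, u x ∂μ + ∫ x, v x ∂ν ≤
      exp ε / (exp ε + 1) * (∫ x, D x ∂μ + ∫ x, D x ∂ν) + 2 * c * δ := by
  have hD0 x : 0 ≤ D x := by linarith [huvD x, hu0 x, hv0 x]
  have huD x : u x ≤ D x := by linarith [huvD x, hv0 x]
  have hvD x : v x ≤ D x := by linarith [huvD x, hu0 x]
  have hle {f : α → ℝ} (hfD : ∀ x, f x ≤ D x) {ξ : Measure α} (hξ : ∀ᵐ x ∂ξ, D x ≤ c) :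
      ∀ᵐ x ∂ξ, f x ≤ c := by
    filter_upwards [hξ] with x hx using (hfD x).trans hx
  have hint {f : α → ℝ} (hf : Measurable f) (hf0 : ∀ x, 0 ≤ f x) (hfD : ∀ x, f x ≤ D x)
      {ξ : Measure α} [IsFiniteMeasure ξ] (hξ : ∀ᵐ x ∂ξ, D x ≤ c) : Integrable f ξ :=
    integrable_of_nonneg_of_ae_le hf hf0 (hle hfD hξ)
  have hsplit {ξ : Measure α} [IsFiniteMeasure ξ] (hξ : ∀ᵐ x ∂ξ, D x ≤ c) :
      ∫ x, u x ∂ξ + ∫ x, v x ∂ξ ≤ ∫ x, D x ∂ξ := by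
    rw [← integral_add (hint hu hu0 huD hξ) (hint hv hv0 hvD hξ)]
    exact integral_mono ((hint hu hu0 huD hξ).add (hint hv hv0 hvD hξ))
      (hint hD hD0 (fun _ => le_rfl) hξ) huvD
  have hguessμ := hμν.integral_le hδ hc hu hu0 (hle huD hDμ) (hle huD hDν)
  have hguessν := hνμ.integral_le hδ hc hv hv0 (hle hvD hDν) (hle hvD hDμ)
  have he : 0 < exp ε := exp_pos ε
  have hSe := mul_le_mul_of_nonneg_left (add_le_add (hsplit hDμ) (hsplit hDν)) he.le
  have hcδe := mul_nonneg (mul_nonneg hc hδ) he.le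
  rw [div_mul_eq_mul_div, div_add' _ _ _ (by positivity), le_div_iff₀ (by positivity)]
  linarith

end ApproximateDP

section Ramp

noncomputable def ramp (a τ x : ℝ) : ℝ := max 0 (min 1 ((x - a) / τ))

variable {a τ : ℝ}

lemma ramp_nonneg (x : ℝ) : 0 ≤ ramp a τ x := le_max_left _ _

lemma ramp_le_one (x : ℝ) : ramp a τ x ≤ 1 := max_le zero_le_one (min_le_left _ _)

lemma ramp_mono (hτ : 0 ≤ τ) : Monotone (ramp a τ) := fun x y h => by
  unfold ramp; gcongr

lemma ramp_eq_one (hτ : 0 < τ) {x : ℝ} (h : a + τ ≤ x) : ramp a τ x = 1 := by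
  have : 1 ≤ (x - a) / τ := by rw [le_div_iff₀ hτ]; linarith
  simp [ramp, min_eq_left this]

lemma ramp_eq_zero (hτ : 0 ≤ τ) {x : ℝ} (h : x ≤ a) : ramp a τ x = 0 := by
  have : (x - a) / τ ≤ 0 := div_nonpos_of_nonpos_of_nonneg (by linarith) hτ
  simp [ramp, min_le_of_right_le this]

lemma ramp_le_ite (hτ : 0 ≤ τ) (x : ℝ) : ramp a τ x ≤ if a < x then 1 else 0 := by
  split_ifs with h
  · exact ramp_le_one x
  · exact (ramp_eq_zero hτ (not_lt.1 h)).le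

lemma ramp_add_le (hτ : 0 ≤ τ) (x : ℝ) {d : ℝ} (hd : 0 ≤ d) :
    ramp a τ (x + d) ≤ ramp a τ x + d / τ := by
  have : 0 ≤ d / τ := div_nonneg hd hτ
  simp only [ramp, add_sub_right_comm, add_div]
  rcases le_total 0 ((x - a) / τ) with h | h <;>
    rcases le_total 1 ((x - a) / τ + d / τ) with h' | h' <;>
    simp only [min_def, max_def] <;> split_ifs <;> linarith

end Ramp

section Quantile

variable {ι : Type*} [Fintype ι] [Nonempty ι]

noncomputable def strictTail (w v : ι → ℝ) (y : ℝ) : ℝ := ∑ i, w i * if y < v i then 1 else 0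

/-- A measurable stand-in for the threshold `g t γ`, which need not be measurable. -/
noncomputable def tailQuantile (w v : ι → ℝ) (γ : ℝ) : ℝ :=
  univ.inf' univ_nonempty fun i =>
    if strictTail w v (v i) ≤ γ then v i else univ.sup' univ_nonempty v

variable {w v : ι → ℝ} {γ : ℝ}

lemma strictTail_sup'_eq_zero : strictTail w v (univ.sup' univ_nonempty v) = 0 :=
  sum_eq_zero fun i _ => by simp [not_lt.2 (le_sup' v (mem_univ i))]

lemma strictTail_tailQuantile_le (hγ : 0 ≤ γ) : strictTail w v (tailQuantile w v γ) ≤ γ := by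
  obtain ⟨i, -, hi⟩ := exists_mem_eq_inf' (univ_nonempty (α := ι)) fun i =>
    if strictTail w v (v i) ≤ γ then v i else univ.sup' univ_nonempty v
  rw [tailQuantile, hi]
  split_ifs with h
  · exact h
  · exact strictTail_sup'_eq_zero.trans_le hγ

lemma tailQuantile_le (hw0 : ∀ i, 0 ≤ w i) (hw1 : ∑ i, w i = 1) (hγ : γ < 1) {G : ℝ}
    (hG : ∑ i, w i * (if G ≤ v i then 1 else 0) ≤ γ) : tailQuantile w v γ ≤ G := by
  classical
  have hbelow : (univ.filter fun i => v i ≤ G).Nonempty := by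
    by_contra hempty
    have hall (i : ι) : G ≤ v i := (not_le.1 fun hi => hempty ⟨i, by simpa using hi⟩).le
    simp only [hall, if_true, mul_one, hw1] at hG
    linarith
  -- the largest value below `G` has strict tail at most the weak tail at `G`
  obtain ⟨i₀, hi₀, hmax⟩ := exists_max_image _ v hbelow
  have htail : strictTail w v (v i₀) ≤ γ := by
    refine le_trans (sum_le_sum fun i _ => mul_le_mul_of_nonneg_left ?_ (hw0 i)) hG
    by_cases hi : v i₀ < v i
    · have : G ≤ v i := not_lt.1 fun hiG =>
        (hmax i (mem_filter.2 ⟨mem_univ i, hiG.le⟩)).not_gt hi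
      simp [hi, this]
    · split_ifs <;> simp_all
  calc tailQuantile w v γ ≤ _ := inf'_le _ (mem_univ i₀)
    _ = v i₀ := if_pos htail
    _ ≤ G := (mem_filter.1 hi₀).2

lemma sum_mul_ramp_tailQuantile_le (hw0 : ∀ i, 0 ≤ w i) (hγ : 0 ≤ γ) {τ : ℝ} (hτ : 0 ≤ τ) :
    ∑ i, w i * ramp (tailQuantile w v γ) τ (v i) ≤ γ :=
  (sum_le_sum fun i _ => mul_le_mul_of_nonneg_left (ramp_le_ite hτ _) (hw0 i)).trans
    (strictTail_tailQuantile_le hγ)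

lemma measurable_tailQuantile {α : Type*} [MeasurableSpace α] (w : ι → ℝ) {v : ι → α → ℝ}
    (hv : ∀ i, Measurable (v i)) (γ : ℝ) :
    Measurable fun a => tailQuantile w (fun i => v i a) γ := by
  have htail (i : ι) : Measurable fun a => strictTail w (fun j => v j a) (v i a) :=
    Finset.measurable_sum _ fun j _ =>
      (measurable_const.ite (measurableSet_lt (hv i) (hv j)) measurable_const).const_mul _
  have hfun : (fun a => tailQuantile w (fun i => v i a) γ) = univ.inf' univ_nonempty fun i a =>
      if strictTail w (fun j => v j a) (v i a) ≤ γ then v i a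
      else univ.sup' univ_nonempty fun j => v j a := by
    ext a; simp [tailQuantile, Finset.inf'_apply]
  rw [hfun]
  refine inf'_induction _ _ (fun f hf g hg => hf.inf hg) fun i _ => ?_
  exact Measurable.ite (measurableSet_le (htail i) measurable_const) (hv i)
    (by simpa only [← Finset.sup'_apply] using Finset.measurable_sup' _ fun j _ => hv j)

end Quantile

section SoftThreshold

variable {α : Type*} [MeasurableSpace α]

structure IsSoftThreshold (φ : α → ℝ → ℝ) (L : ℝ) : Prop where
  measurable : Measurable (Function.uncurry φ)
  nonneg : ∀ t x, 0 ≤ φ t x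
  le_one : ∀ t x, φ t x ≤ 1
  mono : ∀ t, Monotone (φ t)
  add_le : ∀ t x {d}, 0 ≤ d → φ t (x + d) ≤ φ t x + L * d

lemma isSoftThreshold_ramp {a : α → ℝ} (ha : Measurable a) {τ : ℝ} (hτ : 0 < τ) :
    IsSoftThreshold (fun t => ramp (a t) τ) τ⁻¹ where
  measurable := by unfold ramp; fun_prop
  nonneg _ := ramp_nonneg
  le_one _ := ramp_le_one
  mono _ := ramp_mono hτ.le
  add_le _ x d hd := by simpa [div_eq_inv_mul] using ramp_add_le hτ.le x hd

variable {φ : α → ℝ → ℝ} {L : ℝ}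

lemma IsSoftThreshold.measurable_comp (hφ : IsSoftThreshold φ L) {x : α → ℝ}
    (hx : Measurable x) : Measurable fun t => φ t (x t) :=
  hφ.measurable.comp (measurable_id.prodMk hx)

lemma IsSoftThreshold.integrable_comp (hφ : IsSoftThreshold φ L) {x : α → ℝ}
    (hx : Measurable x) (μ : Measure α) [IsFiniteMeasure μ] :
    Integrable (fun t => φ t (x t)) μ :=
  integrable_of_nonneg_of_ae_le (hφ.measurable_comp hx) (fun _ => hφ.nonneg _ _)
    (ae_of_all _ fun _ => hφ.le_one _ _)

lemma IsSoftThreshold.lipschitz_nonneg [Nonempty α] (hφ : IsSoftThreshold φ L) : 0 ≤ L := by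
  obtain ⟨t⟩ := ‹Nonempty α›
  have := hφ.add_le t 0 zero_le_one
  have := hφ.mono t (show (0 : ℝ) ≤ 0 + 1 by norm_num)
  linarith

lemma apply_add_max_zero (f : ℝ → ℝ) (b y : ℝ) :
    f (b + max 0 y) = f b + if 0 < y then f (b + |y|) - f b else 0 := by
  split_ifs with h
  · rw [max_eq_right h.le, abs_of_pos h]; ring
  · rw [max_eq_left (not_lt.1 h), add_zero, add_zero]

lemma IsSoftThreshold.integral_add_integral_le (hφ : IsSoftThreshold φ L) {μ ν : Measure α}
    [IsProbabilityMeasure μ] [IsProbabilityMeasure ν] {ε δ : ℝ} (hμν : DPClose μ ν ε δ)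
    (hνμ : DPClose ν μ ε δ) (hδ : 0 ≤ δ) {β x : α → ℝ} (hβ : Measurable β) (hx : Measurable x)
    (hxμ : ∀ᵐ t ∂μ, |x t| ≤ 1) (hxν : ∀ᵐ t ∂ν, |x t| ≤ 1) :
    ∫ t, φ t (β t + max 0 (x t)) ∂μ + ∫ t, φ t (β t + max 0 (-x t)) ∂ν ≤
      exp ε / (exp ε + 1) * (∫ t, φ t (β t + |x t|) ∂μ + ∫ t, φ t (β t + |x t|) ∂ν) +
        (1 - exp ε / (exp ε + 1)) * (∫ t, φ t (β t) ∂μ + ∫ t, φ t (β t) ∂ν) + 2 * L * δ := by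
  have := nonempty_of_isProbabilityMeasure μ
  set f₀ := fun t => φ t (β t)
  set f₁ := fun t => φ t (β t + |x t|)
  have hf₀ (ξ : Measure α) [IsProbabilityMeasure ξ] : Integrable f₀ ξ :=
    hφ.integrable_comp hβ ξ
  have hf₁ (ξ : Measure α) [IsProbabilityMeasure ξ] : Integrable f₁ ξ :=
    hφ.integrable_comp (hβ.add hx.abs) ξ
  have hD : Measurable (f₁ - f₀) :=
    (hφ.measurable_comp (hβ.add hx.abs)).sub (hφ.measurable_comp hβ)
  have hD0 t : 0 ≤ (f₁ - f₀) t :=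
    sub_nonneg.2 (hφ.mono t (le_add_of_nonneg_right (abs_nonneg _)))
  have hDL {ξ : Measure α} (hξ : ∀ᵐ t ∂ξ, |x t| ≤ 1) : ∀ᵐ t ∂ξ, (f₁ - f₀) t ≤ L := by
    filter_upwards [hξ] with t ht
    have := hφ.add_le t (β t) (abs_nonneg (x t))
    simp only [Pi.sub_apply, f₀, f₁]
    nlinarith [hφ.lipschitz_nonneg]
  -- a guess of the sign of `x` collects the increment `f₁ - f₀` exactly when it is right
  set P := {t | 0 < x t}
  set N := {t | x t < 0}
  have hP : MeasurableSet P := measurableSet_lt measurable_const hx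
  have hN : MeasurableSet N := measurableSet_lt hx measurable_const
  have hguess := hμν.integral_add_integral_le hνμ hδ hφ.lipschitz_nonneg (hD.indicator hP)
    (hD.indicator hN) hD (Set.indicator_nonneg fun t _ => hD0 t)
    (Set.indicator_nonneg fun t _ => hD0 t)
    (fun t => by
      simp only [Set.indicator_apply, P, N, Set.mem_ofPred_eq]
      split_ifs <;> linarith [hD0 t])
    (hDL hxμ) (hDL hxν)
  have hsplitP t : φ t (β t + max 0 (x t)) = f₀ t + P.indicator (f₁ - f₀) t := by
    rw [apply_add_max_zero (φ t)]; by_cases h : 0 < x t <;> simp [h, P, f₀, f₁]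
  have hsplitN t : φ t (β t + max 0 (-x t)) = f₀ t + N.indicator (f₁ - f₀) t := by
    rw [apply_add_max_zero (φ t)]; by_cases h : x t < 0 <;> simp [h, N, f₀, f₁]
  simp only [hsplitP, hsplitN]
  rw [integral_add (hf₀ μ) (((hf₁ μ).sub (hf₀ μ)).indicator hP),
    integral_add (hf₀ ν) (((hf₁ ν).sub (hf₀ ν)).indicator hN)]
  rw [integral_sub' (hf₁ μ) (hf₀ μ), integral_sub' (hf₁ ν) (hf₀ ν)] at hguess
  linarith

end SoftThreshold

namespace DPAudit

variable {m : ℕ}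

def hybridTerm (k : ℕ) (t : Fin m → ℝ) (s sh : Fin m → Bool) (i : Fin m) : ℝ :=
  if (i : ℕ) < k then (if sh i then |t i| else 0) else max 0 (t i * sgn (s i))

def hybridScore (k : ℕ) (t : Fin m → ℝ) (s sh : Fin m → Bool) : ℝ := ∑ i, hybridTerm k t s sh i

noncomputable def hybridGiven (M : (Fin m → Bool) → Measure (Fin m → ℝ)) (q : ℝ)
    (φ : (Fin m → ℝ) → ℝ → ℝ) (k : ℕ) (s : Fin m → Bool) : ℝ :=
  ∑ sh, bernVecPr q sh * ∫ t, φ t (hybridScore k t s sh) ∂M s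

noncomputable def hybrid (M : (Fin m → Bool) → Measure (Fin m → ℝ)) (q : ℝ)
    (φ : (Fin m → ℝ) → ℝ → ℝ) (k : ℕ) : ℝ :=
  ∑ s, bernVecPr (1 / 2) s * hybridGiven M q φ k s

lemma measurable_sum_hybridTerm (k : ℕ) (S : Finset (Fin m)) (s sh : Fin m → Bool) :
    Measurable fun t => ∑ i ∈ S, hybridTerm k t s sh i :=
  Finset.measurable_sum _ fun i _ => by unfold hybridTerm; split_ifs <;> fun_prop

lemma measurable_hybridScore (k : ℕ) (s sh : Fin m → Bool) :
    Measurable fun t => hybridScore k t s sh :=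
  measurable_sum_hybridTerm k univ s sh

lemma hybridScore_zero (t : Fin m → ℝ) (s sh : Fin m → Bool) :
    hybridScore 0 t s sh = ∑ i, max 0 (t i * sgn (s i)) := by
  simp [hybridScore, hybridTerm]

lemma hybridScore_self (t : Fin m → ℝ) (s sh : Fin m → Bool) :
    hybridScore m t s sh = ∑ i, if sh i then |t i| else 0 := by
  simp [hybridScore, hybridTerm]

variable {M : (Fin m → Bool) → Measure (Fin m → ℝ)} {q : ℝ} {φ : (Fin m → ℝ) → ℝ → ℝ}

section Step

variable {k : ℕ} {κ : Fin m}

lemma hybridScore_eq_sum_erase_add (hκ : (κ : ℕ) = k) (t : Fin m → ℝ) (s sh : Fin m → Bool) :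
    hybridScore k t s sh =
      ∑ i ∈ univ.erase κ, hybridTerm k t s sh i + max 0 (t κ * sgn (s κ)) := by
  rw [hybridScore, ← sum_erase_add _ _ (mem_univ κ), hybridTerm, if_neg (by omega)]

lemma hybridScore_succ_eq_sum_erase_add (hκ : (κ : ℕ) = k) (t : Fin m → ℝ)
    (s sh : Fin m → Bool) :
    hybridScore (k + 1) t s sh =
      ∑ i ∈ univ.erase κ, hybridTerm k t s sh i + if sh κ then |t κ| else 0 := by
  rw [hybridScore, ← sum_erase_add _ _ (mem_univ κ), hybridTerm, if_pos (by omega)]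
  congr 1
  refine sum_congr rfl fun i hi => if_congr ?_ rfl rfl
  have : (i : ℕ) ≠ k := fun h => (mem_erase.1 hi).1 (Fin.ext (h.trans hκ.symm))
  omega

lemma sum_erase_hybridTerm_congr (t : Fin m → ℝ) {s s' sh sh' : Fin m → Bool}
    (hs : ∀ i ≠ κ, s' i = s i) (hsh : ∀ i ≠ κ, sh' i = sh i) :
    ∑ i ∈ univ.erase κ, hybridTerm k t s' sh' i = ∑ i ∈ univ.erase κ, hybridTerm k t s sh i :=
  sum_congr rfl fun i hi => by
    rw [hybridTerm, hybridTerm, hs i (mem_erase.1 hi).1, hsh i (mem_erase.1 hi).1]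

lemma hybridGiven_update (hκ : (κ : ℕ) = k) (s : Fin m → Bool) (b : Bool) :
    hybridGiven M q φ k (Function.update s κ b) = ∑ sh, bernVecPr q sh *
      ∫ t, φ t (∑ i ∈ univ.erase κ, hybridTerm k t s sh i + max 0 (t κ * sgn b))
        ∂M (Function.update s κ b) := by
  refine sum_congr rfl fun sh _ => ?_
  have hoff (t : Fin m → ℝ) := sum_erase_hybridTerm_congr (k := k) (κ := κ) t
    (fun i hi => Function.update_of_ne hi b s) (fun _ _ => rfl) (sh := sh)
  simp only [hybridScore_eq_sum_erase_add hκ, Function.update_self, hoff]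

lemma hybridGiven_succ_update (hκ : (κ : ℕ) = k) (s : Fin m → Bool) (b : Bool) :
    hybridGiven M q φ (k + 1) (Function.update s κ b) = ∑ sh, bernVecPr q sh *
      (q * ∫ t, φ t (∑ i ∈ univ.erase κ, hybridTerm k t s sh i + |t κ|)
          ∂M (Function.update s κ b) +
        (1 - q) * ∫ t, φ t (∑ i ∈ univ.erase κ, hybridTerm k t s sh i)
          ∂M (Function.update s κ b)) := by
  rw [hybridGiven, sum_bernVecPr_mul_eq_sum_update q κ]
  refine sum_congr rfl fun sh _ => ?_
  have hoff (t : Fin m → ℝ) (c : Bool) := sum_erase_hybridTerm_congr (k := k) (κ := κ) t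
    (fun i hi => Function.update_of_ne hi b s) (fun i hi => Function.update_of_ne hi c sh)
  simp only [hybridScore_succ_eq_sum_erase_add hκ, Function.update_self, hoff, add_zero,
    if_true, Bool.false_eq_true, if_false]

lemma hybridGiven_pair_le [∀ s, IsProbabilityMeasure (M s)]
    (hrange : ∀ s, ∀ᵐ t ∂M s, ∀ i, |t i| ≤ 1) {ε δ L : ℝ} (hDP : ApproxDP M ε δ) (hδ : 0 ≤ δ)
    (hφ : IsSoftThreshold φ L) (hκ : (κ : ℕ) = k) (s : Fin m → Bool) :
    1 / 2 * hybridGiven M (exp ε / (exp ε + 1)) φ k (Function.update s κ true) +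
        (1 - 1 / 2) * hybridGiven M (exp ε / (exp ε + 1)) φ k (Function.update s κ false) ≤
      1 / 2 * hybridGiven M (exp ε / (exp ε + 1)) φ (k + 1) (Function.update s κ true) +
        (1 - 1 / 2) * hybridGiven M (exp ε / (exp ε + 1)) φ (k + 1) (Function.update s κ false) +
      L * δ := by
  have hadj (b c : Bool) : Adjacent (Function.update s κ b) (Function.update s κ c) :=
    ⟨κ, fun i hi => by simp [Function.update_of_ne hi]⟩
  have hrangeκ (b : Bool) : ∀ᵐ t ∂M (Function.update s κ b), |t κ| ≤ 1 := by
    filter_upwards [hrange (Function.update s κ b)] with t ht using ht κ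
  rw [hybridGiven_update hκ, hybridGiven_update hκ, hybridGiven_succ_update hκ,
    hybridGiven_succ_update hκ]
  refine sum_half_add_sum_half_le (sum_bernVecPr _)
    (bernVecPr_nonneg (by positivity) (exp_div_exp_add_one_le_one ε)) fun sh => ?_
  have := hφ.integral_add_integral_le (hDP.dpClose (hadj true false))
    (hDP.dpClose (hadj false true)) hδ (measurable_sum_hybridTerm k (univ.erase κ) s sh)
    (measurable_pi_apply κ) (hrangeκ true) (hrangeκ false)
  simp only [sgn, ↓reduceIte, mul_one, mul_neg, Bool.false_eq_true]
  linarith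

end Step

lemma hybrid_le_hybrid_succ_add [∀ s, IsProbabilityMeasure (M s)]
    (hrange : ∀ s, ∀ᵐ t ∂M s, ∀ i, |t i| ≤ 1) {ε δ L : ℝ} (hDP : ApproxDP M ε δ) (hδ : 0 ≤ δ)
    (hφ : IsSoftThreshold φ L) {k : ℕ} (hk : k < m) :
    hybrid M (exp ε / (exp ε + 1)) φ k ≤ hybrid M (exp ε / (exp ε + 1)) φ (k + 1) + L * δ := by
  set κ : Fin m := ⟨k, hk⟩
  rw [hybrid, hybrid, sum_bernVecPr_mul_eq_sum_update _ κ (hybridGiven M _ φ k),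
    sum_bernVecPr_mul_eq_sum_update _ κ (hybridGiven M _ φ (k + 1))]
  calc _ ≤ ∑ s, bernVecPr (1 / 2) s *
        (1 / 2 * hybridGiven M (exp ε / (exp ε + 1)) φ (k + 1) (Function.update s κ true) +
          (1 - 1 / 2) * hybridGiven M (exp ε / (exp ε + 1)) φ (k + 1) (Function.update s κ false) +
          L * δ) :=
        sum_le_sum fun s _ => mul_le_mul_of_nonneg_left
          (hybridGiven_pair_le hrange hDP hδ hφ rfl s)
          (bernVecPr_nonneg (by norm_num) (by norm_num) s)
    _ = _ := by simp only [mul_add, sum_add_distrib, ← sum_mul, sum_bernVecPr, one_mul]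

lemma hybrid_zero_le_hybrid_add [∀ s, IsProbabilityMeasure (M s)]
    (hrange : ∀ s, ∀ᵐ t ∂M s, ∀ i, |t i| ≤ 1) {ε δ L : ℝ} (hDP : ApproxDP M ε δ) (hδ : 0 ≤ δ)
    (hφ : IsSoftThreshold φ L) :
    hybrid M (exp ε / (exp ε + 1)) φ 0 ≤ hybrid M (exp ε / (exp ε + 1)) φ m + m * (L * δ) := by
  have := sum_le_sum fun k (hk : k ∈ range m) =>
    sub_le_iff_le_add'.2 (hybrid_le_hybrid_succ_add hrange hDP hδ hφ (mem_range.1 hk))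
  rw [sum_range_sub', sum_const, card_range, nsmul_eq_mul] at this
  linarith

lemma hybrid_zero_eq :
    hybrid M q φ 0 = ∑ s, bernVecPr (1 / 2) s * ∫ t, φ t (∑ i, max 0 (t i * sgn (s i))) ∂M s := by
  simp only [hybrid, hybridGiven, hybridScore_zero, ← sum_mul, sum_bernVecPr, one_mul]

lemma hybrid_self_le [∀ s, IsProbabilityMeasure (M s)] {L : ℝ} (hφ : IsSoftThreshold φ L)
    {γ : ℝ} (hγ : ∀ t, ∑ sh, bernVecPr q sh * φ t (∑ i, if sh i then |t i| else 0) ≤ γ) :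
    hybrid M q φ m ≤ γ := by
  have hgiven (s : Fin m → Bool) : hybridGiven M q φ m s ≤ γ := by
    have hint (sh : Fin m → Bool) :=
      (hφ.integrable_comp (measurable_hybridScore m s sh) (M s)).const_mul (bernVecPr q sh)
    simp only [hybridGiven, ← integral_const_mul]
    rw [← integral_finsetSum _ fun sh _ => hint sh]
    calc _ ≤ ∫ _, γ ∂M s := integral_mono (integrable_finsetSum _ fun sh _ => hint sh)
          (integrable_const γ) fun t => by simpa only [hybridScore_self] using hγ t
      _ = γ := by simp
  calc hybrid M q φ m ≤ ∑ s, bernVecPr (1 / 2) s * γ := sum_le_sum fun s _ =>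
        mul_le_mul_of_nonneg_left (hgiven s) (bernVecPr_nonneg (by norm_num) (by norm_num) s)
    _ = γ := by rw [← sum_mul, sum_bernVecPr, one_mul]

noncomputable def jointLaw (M : (Fin m → Bool) → Measure (Fin m → ℝ)) :
    Measure ((Fin m → ℝ) × (Fin m → Bool)) :=
  (PMF.uniformOfFintype (Fin m → Bool)).toMeasure.bind fun s => (M s).map fun t => (t, s)

instance [∀ s, IsProbabilityMeasure (M s)] : IsProbabilityMeasure (jointLaw M) :=
  isProbabilityMeasure_bind Measurable.of_discrete.aemeasurable
    (ae_of_all _ fun _ => Measure.isProbabilityMeasure_map (by fun_prop))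

lemma measureReal_jointLaw [∀ s, IsProbabilityMeasure (M s)]
    {E : Set ((Fin m → ℝ) × (Fin m → Bool))} (hE : MeasurableSet E) :
    (jointLaw M).real E = ∑ s, bernVecPr (1 / 2) s * (M s).real {t | (t, s) ∈ E} := by
  rw [measureReal_def, jointLaw, Measure.bind_apply hE Measurable.of_discrete.aemeasurable,
    lintegral_fintype, ENNReal.toReal_sum fun s _ => by finiteness]
  refine sum_congr rfl fun s _ => ?_
  rw [Measure.map_apply (by fun_prop) hE, PMF.toMeasure_apply_singleton _ _ (by measurability),
    PMF.uniformOfFintype_apply, ENNReal.toReal_mul, mul_comm, bernVecPr_half]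
  simp [measureReal_def, Set.preimage]

lemma measureReal_jointLaw_le_hybrid_zero [∀ s, IsProbabilityMeasure (M s)]
    (hrange : ∀ s, ∀ᵐ t ∂M s, ∀ i, |t i| ≤ 1) {a : (Fin m → ℝ) → ℝ} (ha : Measurable a)
    {τ : ℝ} (hτ : 0 < τ) :
    (jointLaw M).real {p | (∀ i, |p.1 i| ≤ 1) → a p.1 + τ ≤ ∑ i, max 0 (p.1 i * sgn (p.2 i))} ≤
      hybrid M q (fun t => ramp (a t) τ) 0 := by
  set E := {p : (Fin m → ℝ) × (Fin m → Bool) |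
    (∀ i, |p.1 i| ≤ 1) → a p.1 + τ ≤ ∑ i, max 0 (p.1 i * sgn (p.2 i))}
  have hE : MeasurableSet E := by
    refine MeasurableSet.imp ?_ (measurableSet_le (by fun_prop) ?_)
    · simp only [Set.ofPred_forall]
      exact .iInter fun i => measurableSet_le (by fun_prop) measurable_const
    · exact Finset.measurable_sum _ fun i _ => by fun_prop
  rw [measureReal_jointLaw hE, hybrid_zero_eq]
  refine sum_le_sum fun s _ =>
    mul_le_mul_of_nonneg_left ?_ (bernVecPr_nonneg (by norm_num) (by norm_num) s)
  have hEs : MeasurableSet {t | (t, s) ∈ E} := measurable_prodMk_right hE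
  rw [← integral_indicator_one hEs]
  refine integral_mono_ae ((integrable_const 1).indicator hEs)
    ((isSoftThreshold_ramp ha hτ).integrable_comp (by fun_prop) _) ?_
  filter_upwards [hrange s] with t ht
  by_cases h : (t, s) ∈ E
  · simp [Set.indicator_of_mem (show t ∈ {t | (t, s) ∈ E} from h), ramp_eq_one hτ (h ht)]
  · simp [Set.indicator_of_notMem (show t ∉ {t | (t, s) ∈ E} from h), ramp_nonneg]

noncomputable def coinQuantile (q γ : ℝ) (t : Fin m → ℝ) : ℝ :=
  tailQuantile (bernVecPr q) (fun sh => ∑ i, if sh i then |t i| else 0) γ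

lemma measurable_coinQuantile (q γ : ℝ) : Measurable (coinQuantile (m := m) q γ) := by
  have hcoin (sh : Fin m → Bool) :
      Measurable fun t : Fin m → ℝ => ∑ i, if sh i then |t i| else 0 := by
    simpa only [hybridScore_self] using measurable_hybridScore m sh sh
  exact measurable_tailQuantile _ hcoin γ

end DPAudit

open DPAudit

theorem approx_dp_audit_adaptive_general (m : ℕ) (ε δ : ℝ) (hδ0 : 0 ≤ δ)
    (M : (Fin m → Bool) → Measure (Fin m → ℝ))
    (hMprob : ∀ s, IsProbabilityMeasure (M s))
    (hrange : ∀ s, ∀ᵐ t ∂(M s), ∀ i, |t i| ≤ 1)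
    (hDP : ApproxDP M ε δ)
    (g : (Fin m → ℝ) → ℝ → ℝ)
    (hg : ∀ t : Fin m → ℝ, (∀ i, |t i| ≤ 1) → ∀ γ : ℝ, 0 ≤ γ → γ ≤ 1 →
      ∑ sh : Fin m → Bool, bernVecPr (exp ε / (exp ε + 1)) sh *
          (if g t γ ≤ ∑ i, (if sh i then |t i| else 0) then 1 else 0) ≤ γ)
    (ρ : Measure ((Fin m → ℝ) × (Fin m → Bool)))
    (hρ : ρ = ((PMF.uniformOfFintype (Fin m → Bool)).toMeasure).bind
        (fun s => (M s).map (fun t => (t, s))))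
    (γ τ : ℝ) (hγ0 : 0 ≤ γ) (hγ1 : γ ≤ 1) (hτ : 0 < τ) :
    (ρ {p : (Fin m → ℝ) × (Fin m → Bool) |
        g p.1 γ + τ ≤ ∑ i, max 0 (p.1 i * sgn (p.2 i))}).toReal
      ≤ γ + 2 * m * δ / τ := by
  rw [show ρ = jointLaw M from hρ, ← measureReal_def]
  have hhalf : (m : ℝ) * (τ⁻¹ * δ) = 2 * m * δ / τ / 2 := by ring
  have hslack : 0 ≤ 2 * m * δ / τ := by positivity
  rcases le_or_gt 1 γ with hγ | hγ
  · exact measureReal_le_one.trans (by linarith)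
  set q := exp ε / (exp ε + 1)
  have hq0 : 0 ≤ q := by positivity
  have hq1 : q ≤ 1 := exp_div_exp_add_one_le_one ε
  have hφ := isSoftThreshold_ramp (measurable_coinQuantile (m := m) q γ) hτ
  calc _ ≤ (jointLaw M).real {p | (∀ i, |p.1 i| ≤ 1) →
          coinQuantile q γ p.1 + τ ≤ ∑ i, max 0 (p.1 i * sgn (p.2 i))} :=
        measureReal_mono fun p hp hbound => le_trans (add_le_add_left (tailQuantile_le
          (bernVecPr_nonneg hq0 hq1) (sum_bernVecPr q) hγ (hg p.1 hbound γ hγ0 hγ1)) τ) hp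
    _ ≤ hybrid M q (fun t => ramp (coinQuantile q γ t) τ) 0 :=
        measureReal_jointLaw_le_hybrid_zero hrange (measurable_coinQuantile q γ) hτ
    _ ≤ hybrid M q (fun t => ramp (coinQuantile q γ t) τ) m + m * (τ⁻¹ * δ) :=
        hybrid_zero_le_hybrid_add hrange hDP hδ0 hφ
    _ ≤ γ + 2 * m * δ / τ := by
        have := hybrid_self_le (M := M) hφ fun t =>
          sum_mul_ramp_tailQuantile_le (bernVecPr_nonneg hq0 hq1) hγ0 hτ.le
        linarith

/-- **Variant of the main result.** Let `M : {-1,+1}^m → [-1,+1]^m` be `(ε,δ)`-DP, `S` uniform,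
`T = M(S)`. Suppose `g` satisfies `P[∑ᵢ |tᵢ|·Šᵢ ≥ g(t,γ)] ≤ γ` for all `t` and `γ ∈ [0,1]`,
where `Š ~ Bernoulli(eᵉ/(eᵉ+1))^m`. Then for all `γ ∈ [0,1]` and `τ > 0`,
`P[∑ᵢ max{0, Tᵢ·Sᵢ} ≥ g(T,γ) + τ] ≤ γ + 2mδ/τ`. -/
theorem approx_dp_audit_adaptive (m : ℕ) (ε δ : ℝ) (hε : 0 ≤ ε) (hδ0 : 0 ≤ δ) (hδ1 : δ ≤ 1)
    (M : (Fin m → Bool) → Measure (Fin m → ℝ))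
    (hMprob : ∀ s, IsProbabilityMeasure (M s)) (hMmeas : Measurable M)
    (hrange : ∀ s, ∀ᵐ t ∂(M s), ∀ i, |t i| ≤ 1)
    (hDP : ApproxDP M ε δ)
    (g : (Fin m → ℝ) → ℝ → ℝ)
    (hg : ∀ t : Fin m → ℝ, (∀ i, |t i| ≤ 1) → ∀ γ : ℝ, 0 ≤ γ → γ ≤ 1 →
      ∑ sh : Fin m → Bool, bernVecPr (exp ε / (exp ε + 1)) sh *
          (if g t γ ≤ ∑ i, (if sh i then |t i| else 0) then 1 else 0) ≤ γ)
    (ρ : Measure ((Fin m → ℝ) × (Fin m → Bool)))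
    (hρ : ρ = ((PMF.uniformOfFintype (Fin m → Bool)).toMeasure).bind
        (fun s => (M s).map (fun t => (t, s))))
    (γ τ : ℝ) (hγ0 : 0 ≤ γ) (hγ1 : γ ≤ 1) (hτ : 0 < τ) :
    (ρ {p : (Fin m → ℝ) × (Fin m → Bool) |
        g p.1 γ + τ ≤ ∑ i, max 0 (p.1 i * sgn (p.2 i))}).toReal
      ≤ γ + 2 * m * δ / τ :=
  approx_dp_audit_adaptive_general m ε δ hδ0 M hMprob hrange hDP g hg ρ hρ γ τ hγ0 hγ1 hτ
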